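/- arXiv:0804.1573 — 5 statements merged into one kernel-verified Lean document; each statement's English description precedes it below -/
import Mathlib

section
/- Let X be a finite set, P = (x_1,...,x_k) a sequence in X, and μ a finitely supported nonnegative measure on subsets of X defining a map f : X → L_1 with ‖f(u)-f(v)‖_1 = Σ_S μ(S)·|1_S(u)-1_S(v)|. If f is ε-efficient on P (i.e. Σ_{i=1}^{k-1} ‖f(x_i)-f(x_{i+1})‖_1 ≤ (1+ε)·‖f(x_1)-f(x_k)‖_1), then Σ_{S : P not monotone w.r.t. S} μ(S)·|1_S(x_1)-1_S(x_k)| ≤ ε·‖f(x_1)-f(x_k)‖_1. -/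
/-- Indicator function of a finite set `S`, with values in `ℝ`. -/
def ind {X : Type*} [DecidableEq X] (S : Finset X) (v : X) : ℝ := if v ∈ S then 1 else 0

/-- The `L₁` distance determined by a cut measure `μ` on a finite set `X`:
`‖f u - f v‖₁ = Σ_S μ(S)·|1_S(u) - 1_S(v)|`. -/
def cutDist {X : Type*} [Fintype X] [DecidableEq X] (μ : Finset X → ℝ) (u v : X) : ℝ :=
  ∑ S : Finset X, μ S * |ind S u - ind S v|

/-- A sequence `x 0, …, x (k-1)` is monotone with respect to the cut `S` if its
indicator sequence changes value at most once. -/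
def MonotoneWrtCut {X : Type*} [DecidableEq X] (S : Finset X) (x : ℕ → X) (k : ℕ) : Prop :=
  ((Finset.range (k - 1)).filter (fun i => ind S (x i) ≠ ind S (x (i + 1)))).card ≤ 1

/-
On every cut `S` the term `|1_S(x₁) - 1_S(x_k)|` is at most `1` and is bounded, by telescoping, by
the number of changes of the indicator sequence along `P`; a cut for which `P` is not monotone has
at least two changes, so there the term is at most the excess (changes minus the term itself).
Summed against `μ`, the excess is the length of `P` under `f` minus `‖f(x₁) - f(x_k)‖₁`, which
`ε`-efficiency bounds by `ε·‖f(x₁) - f(x_k)‖₁`.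
-/

open Finset

section Cuts

variable {X : Type*} [DecidableEq X] (S : Finset X)

lemma abs_ind_sub_ind (u v : X) :
    |ind S u - ind S v| = if ind S u = ind S v then 0 else 1 := by
  unfold ind
  by_cases hu : u ∈ S <;> by_cases hv : v ∈ S <;> norm_num [hu, hv]

lemma abs_ind_sub_ind_le_one (u v : X) : |ind S u - ind S v| ≤ 1 := by
  rw [abs_ind_sub_ind]
  split <;> norm_num

lemma sum_abs_ind_sub_ind_eq_card (x : ℕ → X) (n : ℕ) :
    ∑ i ∈ range n, |ind S (x i) - ind S (x (i + 1))| =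
      #{i ∈ range n | ind S (x i) ≠ ind S (x (i + 1))} := by
  simp only [abs_ind_sub_ind, sum_ite, sum_const_zero, sum_const, nsmul_eq_mul, mul_one,
    zero_add, filter_not]

lemma abs_ind_sub_ind_le_sum (x : ℕ → X) (n : ℕ) :
    |ind S (x 0) - ind S (x n)| ≤ ∑ i ∈ range n, |ind S (x i) - ind S (x (i + 1))| := by
  simpa only [Real.dist_eq] using dist_le_range_sum_dist (fun i => ind S (x i)) n

lemma two_mul_abs_ind_sub_ind_le_sum_of_not_monotoneWrtCut {x : ℕ → X} {k : ℕ}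
    (h : ¬ MonotoneWrtCut S x k) :
    2 * |ind S (x 0) - ind S (x (k - 1))| ≤
      ∑ i ∈ range (k - 1), |ind S (x i) - ind S (x (i + 1))| := by
  have hchanges : (2 : ℝ) ≤ ∑ i ∈ range (k - 1), |ind S (x i) - ind S (x (i + 1))| := by
    rw [sum_abs_ind_sub_ind_eq_card]
    exact_mod_cast Nat.lt_of_not_le h
  linarith [abs_ind_sub_ind_le_one S (x 0) (x (k - 1))]

end Cuts

lemma sum_cutDist_eq_sum_mul_sum {X : Type*} [Fintype X] [DecidableEq X] (μ : Finset X → ℝ)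
    (x : ℕ → X) (n : ℕ) :
    ∑ i ∈ range n, cutDist μ (x i) (x (i + 1)) =
      ∑ S : Finset X, μ S * ∑ i ∈ range n, |ind S (x i) - ind S (x (i + 1))| := by
  simp only [cutDist, mul_sum]
  exact sum_comm

open Classical in
theorem stmt2_general {X : Type*} [Fintype X] [DecidableEq X] (μ : Finset X → ℝ)
    (hμ : ∀ S, 0 ≤ μ S) (x : ℕ → X) (k : ℕ) (ε : ℝ)
    (heff : ∑ i ∈ Finset.range (k - 1), cutDist μ (x i) (x (i + 1)) ≤
      (1 + ε) * cutDist μ (x 0) (x (k - 1))) :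
    ∑ S ∈ Finset.univ.filter (fun S : Finset X => ¬ MonotoneWrtCut S x k),
        μ S * |ind S (x 0) - ind S (x (k - 1))| ≤
      ε * cutDist μ (x 0) (x (k - 1)) := by
  set d : Finset X → ℝ := fun S => |ind S (x 0) - ind S (x (k - 1))|
  set c : Finset X → ℝ := fun S => ∑ i ∈ range (k - 1), |ind S (x i) - ind S (x (i + 1))|
  have hd_le_excess : ∀ S, ¬ MonotoneWrtCut S x k → d S ≤ c S - d S := fun S hS => by
    linarith [two_mul_abs_ind_sub_ind_le_sum_of_not_monotoneWrtCut S hS]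
  have hexcess_nonneg : ∀ S, 0 ≤ c S - d S := fun S =>
    sub_nonneg.2 (abs_ind_sub_ind_le_sum S x (k - 1))
  calc ∑ S ∈ univ.filter (fun S : Finset X => ¬ MonotoneWrtCut S x k), μ S * d S
      ≤ ∑ S ∈ univ.filter (fun S : Finset X => ¬ MonotoneWrtCut S x k), μ S * (c S - d S) :=
        sum_le_sum fun S hS => mul_le_mul_of_nonneg_left
          (hd_le_excess S (mem_filter.1 hS).2) (hμ S)
    _ ≤ ∑ S : Finset X, μ S * (c S - d S) :=
        sum_le_sum_of_subset_of_nonneg (filter_subset _ _) fun S _ _ =>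
          mul_nonneg (hμ S) (hexcess_nonneg S)
    _ = ∑ i ∈ range (k - 1), cutDist μ (x i) (x (i + 1)) - cutDist μ (x 0) (x (k - 1)) := by
        rw [sum_cutDist_eq_sum_mul_sum]
        simp only [mul_sub, sum_sub_distrib, c, d, cutDist]
    _ ≤ ε * cutDist μ (x 0) (x (k - 1)) := by linarith

open Classical in
/-- If the `L₁` embedding `f` associated to a nonnegative cut measure `μ`
is `ε`-efficient on the sequence `P = (x₁,…,x_k)`, then the cuts with respect to which `P`
fails to be monotone carry at most `ε·‖f(x₁)-f(x_k)‖₁` of the separation measure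
`μ^{x₁|x_k}`. -/
theorem stmt2 {X : Type*} [Fintype X] [DecidableEq X] (μ : Finset X → ℝ)
    (hμ : ∀ S, 0 ≤ μ S) (x : ℕ → X) (k : ℕ) (hk : 1 ≤ k) (ε : ℝ) (hε : 0 ≤ ε)
    (heff : ∑ i ∈ Finset.range (k - 1), cutDist μ (x i) (x (i + 1)) ≤
      (1 + ε) * cutDist μ (x 0) (x (k - 1))) :
    ∑ S ∈ Finset.univ.filter (fun S : Finset X => ¬ MonotoneWrtCut S x k),
        μ S * |ind S (x 0) - ind S (x (k - 1))| ≤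
      ε * cutDist μ (x 0) (x (k - 1)) :=
  stmt2_general μ hμ x k ε heff
end

section
/- Let n ≥ 2 and 0 < ε < 1/2. Let f : V(K_{2,n}) → L_1 be a map that is (ε/n)-efficient on each of the n geodesics s–m_i–t. Then the distortion of f satisfies dist(f) ≥ 2 - 2/n - 2ε. -/
/-!
Write `S`, `T` for the images of the two poles and `mᵢ` for those of the middle vertices. The
quantity `n²/2 ‖S - T‖ + n ∑ᵢ (‖mᵢ - S‖ + ‖mᵢ - T‖ - ‖S - T‖) - ∑ᵢⱼ ‖mᵢ - mⱼ‖` is linear in the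
`L₁` metric, hence the integral of the same expression for real numbers, where it is
nonnegative: clamping the points to the segment between the two poles costs half of each excess,
and for `u, v ∈ [a, b]` one has `|u - v| (b - a) ≤ (u - a)(b - v) + (v - a)(b - u)`, whose sum over
all pairs is at most `(n (b - a))² / 2`. Efficiency bounds the total excess by `ε ‖S - T‖`, and the
middle vertices are pairwise at graph distance `2`, so
`2n(n - 1) / L ≤ ∑ᵢⱼ ‖mᵢ - mⱼ‖ ≤ (n²/2 + nε) · 2K`, which rearranges to the bound.
-/

open MeasureTheory Finset

lemma abs_sub_mul_le_of_mem_Icc {a b u v : ℝ} (hu : u ∈ Set.Icc a b) (hv : v ∈ Set.Icc a b) :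
    |u - v| * (b - a) ≤ (u - a) * (b - v) + (v - a) * (b - u) := by
  obtain ⟨hau, hub⟩ := hu
  obtain ⟨hav, hvb⟩ := hv
  rcases le_total u v with huv | hvu
  · rw [abs_of_nonpos (sub_nonpos.mpr huv)]
    nlinarith [mul_nonneg (sub_nonneg.mpr hau) (sub_nonneg.mpr hvb)]
  · rw [abs_of_nonneg (sub_nonneg.mpr hvu)]
    nlinarith [mul_nonneg (sub_nonneg.mpr hav) (sub_nonneg.mpr hub)]

lemma sum_sum_abs_sub_le_of_mem_Icc {ι : Type*} {a b : ℝ} (hab : a ≤ b) (s : Finset ι)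
    {y : ι → ℝ} (hy : ∀ i ∈ s, y i ∈ Set.Icc a b) :
    ∑ i ∈ s, ∑ j ∈ s, |y i - y j| ≤ (#s : ℝ) ^ 2 / 2 * (b - a) := by
  rcases hab.eq_or_lt with rfl | hab
  · have hya : ∀ i ∈ s, y i = a := fun i hi => le_antisymm (hy i hi).2 (hy i hi).1
    simp +contextual [hya]
  set P := ∑ i ∈ s, (y i - a)
  set Q := ∑ i ∈ s, (b - y i)
  have hPQ : P + Q = #s * (b - a) := by
    rw [← sum_add_distrib]
    simp [mul_sub]
  have key : (∑ i ∈ s, ∑ j ∈ s, |y i - y j|) * (b - a) ≤ 2 * P * Q :=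
    calc (∑ i ∈ s, ∑ j ∈ s, |y i - y j|) * (b - a)
        ≤ ∑ i ∈ s, ∑ j ∈ s, ((y i - a) * (b - y j) + (y j - a) * (b - y i)) := by
          simp only [sum_mul]
          exact sum_le_sum fun i hi => sum_le_sum fun j hj =>
            abs_sub_mul_le_of_mem_Icc (hy i hi) (hy j hj)
      _ = 2 * P * Q := by
          simp only [sum_add_distrib, ← mul_sum, ← sum_mul, P, Q]
          ring
  refine le_of_mul_le_mul_right (key.trans ?_) (sub_pos.mpr hab)
  calc 2 * P * Q ≤ (P + Q) ^ 2 / 2 := by nlinarith [sq_nonneg (P - Q)]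
    _ = (#s : ℝ) ^ 2 / 2 * (b - a) * (b - a) := by rw [hPQ]; ring

lemma two_mul_abs_sub_projIcc {a b : ℝ} (hab : a ≤ b) (x : ℝ) :
    2 * |x - Set.projIcc a b hab x| = |x - a| + |x - b| - (b - a) := by
  rcases le_total x a with hxa | hax
  · rw [Set.projIcc_of_le_left hab hxa, abs_of_nonpos (sub_nonpos.mpr hxa),
      abs_of_nonpos (by linarith : x - b ≤ 0)]
    ring
  rcases le_total b x with hbx | hxb
  · rw [Set.projIcc_of_right_le hab hbx, abs_of_nonneg (sub_nonneg.mpr hbx),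
      abs_of_nonneg (by linarith : 0 ≤ x - a)]
    ring
  · rw [Set.projIcc_of_mem hab ⟨hax, hxb⟩, abs_of_nonneg (sub_nonneg.mpr hax),
      abs_of_nonpos (sub_nonpos.mpr hxb), sub_self, abs_zero]
    ring

lemma sum_sum_abs_sub_le {ι : Type*} (a b : ℝ) (s : Finset ι) (x : ι → ℝ) :
    ∑ i ∈ s, ∑ j ∈ s, |x i - x j| ≤
      (#s : ℝ) ^ 2 / 2 * |a - b| + #s * ∑ i ∈ s, (|x i - a| + |x i - b| - |a - b|) := by
  wlog hab : a ≤ b generalizing a b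
  · simpa only [abs_sub_comm b a, add_comm |x _ - b|] using this b a (le_of_not_ge hab)
  rw [abs_sub_comm, abs_of_nonneg (sub_nonneg.mpr hab)]
  set y : ι → ℝ := fun i => Set.projIcc a b hab (x i)
  have htri : ∀ i j, |x i - x j| ≤ |y i - y j| + (|x i - y i| + |x j - y j|) := fun i j => by
    linarith [abs_sub_le (x i) (y i) (x j), abs_sub_le (y i) (y j) (x j), abs_sub_comm (y j) (x j)]
  calc ∑ i ∈ s, ∑ j ∈ s, |x i - x j|
      ≤ ∑ i ∈ s, ∑ j ∈ s, (|y i - y j| + (|x i - y i| + |x j - y j|)) :=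
        sum_le_sum fun i _ => sum_le_sum fun j _ => htri i j
    _ = ∑ i ∈ s, ∑ j ∈ s, |y i - y j| + #s * ∑ i ∈ s, 2 * |x i - y i| := by
        simp only [sum_add_distrib, sum_const, nsmul_eq_mul, ← mul_sum]
        ring
    _ ≤ (#s : ℝ) ^ 2 / 2 * (b - a) + #s * ∑ i ∈ s, (|x i - a| + |x i - b| - (b - a)) := by
        simp only [y, two_mul_abs_sub_projIcc]
        gcongr
        exact sum_sum_abs_sub_le_of_mem_Icc hab s fun i _ => (Set.projIcc a b hab (x i)).2

namespace MeasureTheory.L1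

variable {Ω : Type*} [MeasurableSpace Ω] {μ : Measure Ω}

lemma norm_sub_eq_integral_abs_sub (f g : Lp ℝ 1 μ) : ‖f - g‖ = ∫ ω, |f ω - g ω| ∂μ := by
  rw [L1.norm_eq_integral_norm]
  exact integral_congr_ae <| (Lp.coeFn_sub f g).mono fun ω h => by
    simp only [h, Pi.sub_apply, Real.norm_eq_abs]

lemma integrable_abs_sub (f g : Lp ℝ 1 μ) : Integrable (fun ω => |f ω - g ω|) μ :=
  ((L1.integrable_coeFn f).sub (L1.integrable_coeFn g)).abs

lemma sum_sum_norm_sub_le {ι : Type*} (S T : Lp ℝ 1 μ) (s : Finset ι) (m : ι → Lp ℝ 1 μ) :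
    ∑ i ∈ s, ∑ j ∈ s, ‖m i - m j‖ ≤
      (#s : ℝ) ^ 2 / 2 * ‖S - T‖ + #s * ∑ i ∈ s, (‖m i - S‖ + ‖m i - T‖ - ‖S - T‖) := by
  have hint := integrable_abs_sub (μ := μ)
  have hexc : ∀ i, Integrable (fun ω => |m i ω - S ω| + |m i ω - T ω| - |S ω - T ω|) μ :=
    fun i => ((hint _ _).add (hint _ _)).sub (hint _ _)
  simp only [norm_sub_eq_integral_abs_sub]
  calc ∑ i ∈ s, ∑ j ∈ s, ∫ ω, |m i ω - m j ω| ∂μ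
      = ∫ ω, ∑ i ∈ s, ∑ j ∈ s, |m i ω - m j ω| ∂μ := by
        rw [integral_finsetSum _ fun i _ => integrable_finsetSum _ fun j _ => hint _ _]
        exact sum_congr rfl fun i _ => (integral_finsetSum _ fun j _ => hint _ _).symm
    _ ≤ ∫ ω, ((#s : ℝ) ^ 2 / 2 * |S ω - T ω| +
          #s * ∑ i ∈ s, (|m i ω - S ω| + |m i ω - T ω| - |S ω - T ω|)) ∂μ :=
        integral_mono
          (integrable_finsetSum _ fun i _ => integrable_finsetSum _ fun j _ => hint _ _)
          (((hint _ _).const_mul _).add ((integrable_finsetSum _ fun i _ => hexc i).const_mul _))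
          fun ω => sum_sum_abs_sub_le _ _ _ _
    _ = _ := by
        rw [MeasureTheory.integral_add ?_ ?_, integral_const_mul, integral_const_mul,
          integral_finsetSum _ fun i _ => hexc i]
        · congr 2
          refine sum_congr rfl fun i _ => ?_
          rw [MeasureTheory.integral_sub ?_ (hint _ _),
            MeasureTheory.integral_add (hint _ _) (hint _ _)]
          exact (hint _ _).add (hint _ _)
        · exact (hint _ _).const_mul _
        · exact (integrable_finsetSum _ fun i _ => hexc i).const_mul _

lemma sum_sum_norm_sub_le_of_efficient {ι : Type*} (S T : Lp ℝ 1 μ) (s : Finset ι)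
    (m : ι → Lp ℝ 1 μ) {δ : ℝ} (h : ∀ i ∈ s, ‖S - m i‖ + ‖m i - T‖ ≤ (1 + δ) * ‖S - T‖) :
    ∑ i ∈ s, ∑ j ∈ s, ‖m i - m j‖ ≤ #s ^ 2 * (1 / 2 + δ) * ‖S - T‖ := by
  have hexcess : ∑ i ∈ s, (‖m i - S‖ + ‖m i - T‖ - ‖S - T‖) ≤ #s * (δ * ‖S - T‖) := by
    rw [← nsmul_eq_mul]
    exact sum_le_card_nsmul _ _ _ fun i hi => by linarith [h i hi, norm_sub_rev S (m i)]
  calc _ ≤ (#s : ℝ) ^ 2 / 2 * ‖S - T‖ + #s * ∑ i ∈ s, (‖m i - S‖ + ‖m i - T‖ - ‖S - T‖) :=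
        sum_sum_norm_sub_le S T s m
    _ ≤ (#s : ℝ) ^ 2 / 2 * ‖S - T‖ + #s * (#s * (δ * ‖S - T‖)) := by gcongr
    _ = #s ^ 2 * (1 / 2 + δ) * ‖S - T‖ := by ring

end MeasureTheory.L1

lemma SimpleGraph.dist_eq_two_of_adj_of_adj {V : Type*} {G : SimpleGraph V} {u v w : V}
    (huv : u ≠ v) (hnadj : ¬G.Adj u v) (huw : G.Adj u w) (hwv : G.Adj w v) : G.dist u v = 2 := by
  rw [SimpleGraph.dist,
    G.edist_eq_two_iff.mpr ⟨huv, hnadj, w, G.mem_commonNeighbors.mpr ⟨huw, hwv.symm⟩⟩]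
  rfl

section completeBipartiteGraph

variable {α β : Type*}

lemma completeBipartiteGraph_dist_inl_inl {a a' : α} (h : a ≠ a') (b : β) :
    (completeBipartiteGraph α β).dist (.inl a) (.inl a') = 2 :=
  SimpleGraph.dist_eq_two_of_adj_of_adj (by simpa) (by simp) (w := .inr b) (by simp) (by simp)

lemma completeBipartiteGraph_dist_inr_inr {b b' : β} (h : b ≠ b') (a : α) :
    (completeBipartiteGraph α β).dist (.inr b) (.inr b') = 2 :=
  SimpleGraph.dist_eq_two_of_adj_of_adj (by simpa) (by simp) (w := .inl a) (by simp) (by simp)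

end completeBipartiteGraph

lemma Finset.card_mul_card_sub_one_mul_le_sum_sum {ι : Type*} [DecidableEq ι] (s : Finset ι)
    {g : ι → ι → ℝ} {c : ℝ} (hdiag : ∀ i ∈ s, 0 ≤ g i i)
    (hne : ∀ i ∈ s, ∀ j ∈ s, i ≠ j → c ≤ g i j) :
    #s * (#s - 1) * c ≤ ∑ i ∈ s, ∑ j ∈ s, g i j := by
  rw [mul_assoc, ← nsmul_eq_mul]
  refine card_nsmul_le_sum _ _ _ fun i hi => ?_
  rw [← add_sum_erase s _ hi]
  have hrow := card_nsmul_le_sum (s.erase i) (g i) c fun j hj =>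
    hne i hi j (mem_of_mem_erase hj) (ne_of_mem_erase hj).symm
  rw [card_erase_of_mem hi, nsmul_eq_mul, Nat.cast_pred (card_pos.mpr ⟨i, hi⟩)] at hrow
  linarith [hdiag i hi]

lemma two_sub_two_div_sub_le_of_mul_le {n ε x : ℝ} (hn : 0 < n) (hε : 0 ≤ ε)
    (h : 2 * n * (n - 1) ≤ (n ^ 2 + 2 * n * ε) * x) : 2 - 2 / n - 2 * ε ≤ x := by
  have hpos : 0 < n ^ 2 + 2 * n * ε := by positivity
  refine le_of_mul_le_mul_left (h.trans' ?_) hpos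
  have hn' : (2 - 2 / n - 2 * ε) * n = 2 * n - 2 - 2 * n * ε := by field_simp
  calc (n ^ 2 + 2 * n * ε) * (2 - 2 / n - 2 * ε)
      = (2 * n - 2 - 2 * n * ε) * (n + 2 * ε) := by rw [← hn']; ring
    _ ≤ 2 * n * (n - 1) := by
      nlinarith [mul_nonneg hε (sq_nonneg (n - 1)), mul_nonneg (mul_nonneg hε hε) hn.le]

theorem stmt6_general {Ω : Type*} [MeasurableSpace Ω] (μ : Measure Ω)
    (n : ℕ) (hn : 2 ≤ n) (ε : ℝ) (hε : 0 < ε)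
    (f : Bool ⊕ Fin n → Lp ℝ 1 μ) (K L : ℝ)
    (hK : ∀ u v, ‖f u - f v‖ ≤
      K * ((completeBipartiteGraph Bool (Fin n)).dist u v : ℝ))
    (hL : ∀ u v, ((completeBipartiteGraph Bool (Fin n)).dist u v : ℝ) ≤ L * ‖f u - f v‖)
    (heff : ∀ i : Fin n,
      ‖f (Sum.inl false) - f (Sum.inr i)‖ + ‖f (Sum.inr i) - f (Sum.inl true)‖ ≤
        (1 + ε / n) * ‖f (Sum.inl false) - f (Sum.inl true)‖) :
    2 - 2 / (n : ℝ) - 2 * ε ≤ K * L := by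
  set S := f (.inl false)
  set T := f (.inl true)
  set m : Fin n → Lp ℝ 1 μ := fun i => f (.inr i)
  have hn0 : (0 : ℝ) < n := by positivity
  have hST := completeBipartiteGraph_dist_inl_inl Bool.false_ne_true (⟨0, by omega⟩ : Fin n)
  have hSTK : ‖S - T‖ ≤ 2 * K := by simpa [hST, mul_comm] using hK (.inl false) (.inl true)
  have hSTL : 2 ≤ L * ‖S - T‖ := by simpa [hST] using hL (.inl false) (.inl true)
  have hLpos : 0 < L := pos_of_mul_pos_left (by linarith) (norm_nonneg _)
  have lower : n * (n - 1) * 2 ≤ L * ∑ i, ∑ j, ‖m i - m j‖ := by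
    simp only [mul_sum]
    simpa using card_mul_card_sub_one_mul_le_sum_sum univ (g := fun i j => L * ‖m i - m j‖)
      (by simp) fun i _ j _ hij => by
        simpa [completeBipartiteGraph_dist_inr_inr hij false] using hL (.inr i) (.inr j)
  have upper := L1.sum_sum_norm_sub_le_of_efficient S T univ m fun i _ => heff i
  simp only [card_univ, Fintype.card_fin] at upper
  refine two_sub_two_div_sub_le_of_mul_le hn0 hε.le ?_
  calc 2 * n * (n - 1 : ℝ) = n * (n - 1) * 2 := by ring
    _ ≤ L * ∑ i, ∑ j, ‖m i - m j‖ := lower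
    _ ≤ L * (n ^ 2 * (1 / 2 + ε / n) * (2 * K)) := by gcongr; exact upper.trans (by gcongr)
    _ = (n ^ 2 + 2 * n * ε) * (K * L) := by field_simp

/-- Let `n ≥ 2`, `0 < ε < 1/2`, and let `f` be a map from the vertices of
`K_{2,n}` (with its unit-length shortest-path metric) into `L₁(μ)` that is `(ε/n)`-efficient
on each geodesic `s–mᵢ–t`.  If `K` is a Lipschitz constant for `f` and `L` a Lipschitz
constant for `f⁻¹`, then the distortion `K·L` is at least `2 - 2/n - 2ε`. -/
theorem stmt6 {Ω : Type*} [MeasurableSpace Ω] (μ : Measure Ω)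
    (n : ℕ) (hn : 2 ≤ n) (ε : ℝ) (hε : 0 < ε) (hε' : ε < 1 / 2)
    (f : Bool ⊕ Fin n → Lp ℝ 1 μ) (K L : ℝ)
    (hK : ∀ u v, ‖f u - f v‖ ≤
      K * ((completeBipartiteGraph Bool (Fin n)).dist u v : ℝ))
    (hL : ∀ u v, ((completeBipartiteGraph Bool (Fin n)).dist u v : ℝ) ≤ L * ‖f u - f v‖)
    (heff : ∀ i : Fin n,
      ‖f (Sum.inl false) - f (Sum.inr i)‖ + ‖f (Sum.inr i) - f (Sum.inl true)‖ ≤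
        (1 + ε / n) * ‖f (Sum.inl false) - f (Sum.inl true)‖) :
    2 - 2 / (n : ℝ) - 2 * ε ≤ K * L :=
  stmt6_general μ n hn ε hε f K L hK hL heff
end

section
/- Let n ≥ 2 and let f : V(K_{2,n}) → L_1 be an embedding whose associated cut measure is supported only on cuts S with ∅ ≠ S ≠ V that are monotone with respect to every geodesic s–m_i–t. Then dist(f) ≥ 2 - 2/n. -/
/-- A three-term sequence of indicator values changes value at most once. -/
def Monotone3 (a b c : Prop) : Prop := ¬ ((¬ (a ↔ b)) ∧ (¬ (b ↔ c)))

/-!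
Every nontrivial cut that is monotone along all geodesics `s – mᵢ – t` must separate `s` from `t`,
so `d_μ(s, t)` is the total mass of `μ`. A cut containing `k` of the `n` middle vertices separates
`2k(n - k) ≤ n²/2` ordered pairs of them, hence `∑ᵢⱼ d_μ(mᵢ, mⱼ) ≤ (n²/2) d_μ(s, t) ≤ n² K`.
In the graph, `∑ᵢⱼ d(mᵢ, mⱼ) = 2n(n - 1)`, and comparing the two sums through `L` gives
`2n(n - 1) ≤ K L n²`.
-/

open Finset

namespace SimpleGraph

variable {V : Type*} (G : SimpleGraph V)

lemma dist_eq_two_iff {u v : V} :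
    G.dist u v = 2 ↔ u ≠ v ∧ ¬ G.Adj u v ∧ (G.commonNeighbors u v).Nonempty := by
  rw [dist, ENat.toNat_eq_iff two_ne_zero, Nat.cast_ofNat, edist_eq_two_iff]

variable {W : Type*}

lemma completeBipartiteGraph_dist_inl_inl [Nonempty W] {a b : V} (hab : a ≠ b) :
    (completeBipartiteGraph V W).dist (.inl a) (.inl b) = 2 := by
  obtain ⟨w⟩ := ‹Nonempty W›
  exact (dist_eq_two_iff _).mpr ⟨by simpa, by simp, .inr w, by simp [mem_commonNeighbors]⟩

lemma completeBipartiteGraph_dist_inr_inr [Nonempty V] {a b : W} (hab : a ≠ b) :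
    (completeBipartiteGraph V W).dist (.inr a) (.inr b) = 2 := by
  obtain ⟨v⟩ := ‹Nonempty V›
  exact (dist_eq_two_iff _).mpr ⟨by simpa, by simp, .inl v, by simp [mem_commonNeighbors]⟩

lemma sum_sum_completeBipartiteGraph_dist_inr_inr [Nonempty V] [Fintype W] [DecidableEq W] :
    ∑ a : W, ∑ b : W, ((completeBipartiteGraph V W).dist (.inr a) (.inr b) : ℝ)
      = 2 * Fintype.card W ^ 2 - 2 * Fintype.card W := by
  have hterm : ∀ a b : W, ((completeBipartiteGraph V W).dist (.inr a) (.inr b) : ℝ)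
      = 2 - if a = b then 2 else 0 := by
    intro a b
    by_cases hab : a = b
    · simp [hab]
    · simp [hab, completeBipartiteGraph_dist_inr_inr hab]
  simp only [hterm, sum_sub_distrib, sum_ite_eq, mem_univ, if_true, sum_const, card_univ,
    nsmul_eq_mul]
  ring

end SimpleGraph

lemma sum_sum_abs_ind_sub_ind_le {X ι : Type*} [DecidableEq X] [Fintype ι] (S : Finset X)
    (g : ι → X) :
    ∑ i, ∑ j, |ind S (g i) - ind S (g j)| ≤ (Fintype.card ι : ℝ) ^ 2 / 2 := by
  set k : ℝ := ∑ i, ind S (g i)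
  have habs : ∀ i j, |ind S (g i) - ind S (g j)|
      = ind S (g i) + ind S (g j) - 2 * (ind S (g i) * ind S (g j)) := by
    intro i j
    unfold ind
    split_ifs <;> norm_num
  have hsum : ∑ i, ∑ j, |ind S (g i) - ind S (g j)|
      = 2 * Fintype.card ι * k - 2 * k ^ 2 := by
    simp only [habs, sum_sub_distrib, sum_add_distrib, ← mul_sum, ← sum_mul, sum_const,
      card_univ, nsmul_eq_mul]
    ring
  rw [hsum]
  nlinarith [sq_nonneg ((Fintype.card ι : ℝ) - 2 * k)]

section CutMeasure

variable {X : Type*} [Fintype X] [DecidableEq X] {μ : Finset X → ℝ}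

lemma cutDist_nonneg (hμ : ∀ S, 0 ≤ μ S) (u v : X) : 0 ≤ cutDist μ u v :=
  sum_nonneg fun S _ => mul_nonneg (hμ S) (abs_nonneg _)

lemma sum_sum_cutDist_le_of_separates {ι : Type*} [Fintype ι] (hμ : ∀ S, 0 ≤ μ S) {u v : X}
    (hsep : ∀ S, μ S ≠ 0 → |ind S u - ind S v| = 1) (g : ι → X) :
    ∑ i, ∑ j, cutDist μ (g i) (g j) ≤ (Fintype.card ι : ℝ) ^ 2 / 2 * cutDist μ u v := by
  have hcut : ∀ S, μ S * ∑ i, ∑ j, |ind S (g i) - ind S (g j)|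
      ≤ (Fintype.card ι : ℝ) ^ 2 / 2 * (μ S * |ind S u - ind S v|) := by
    intro S
    rcases eq_or_ne (μ S) 0 with h | h
    · simp [h]
    · rw [hsep S h, mul_one, mul_comm _ (μ S)]
      exact mul_le_mul_of_nonneg_left (sum_sum_abs_ind_sub_ind_le S g) (hμ S)
  calc ∑ i, ∑ j, cutDist μ (g i) (g j)
      = ∑ S, μ S * ∑ i, ∑ j, |ind S (g i) - ind S (g j)| := by
        simp only [cutDist, mul_sum]
        rw [sum_congr rfl fun _ _ => sum_comm, sum_comm]
    _ ≤ ∑ S, (Fintype.card ι : ℝ) ^ 2 / 2 * (μ S * |ind S u - ind S v|) :=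
        sum_le_sum fun S _ => hcut S
    _ = (Fintype.card ι : ℝ) ^ 2 / 2 * cutDist μ u v := by rw [cutDist, mul_sum]

end CutMeasure

lemma abs_ind_inl_false_sub_ind_inl_true_eq_one {ι : Type*} [Fintype ι] [DecidableEq ι]
    {S : Finset (Bool ⊕ ι)} (hne : S ≠ ∅) (huniv : S ≠ univ)
    (hmono : ∀ i, Monotone3 (.inl false ∈ S) (.inr i ∈ S) (.inl true ∈ S)) :
    |ind S (.inl false) - ind S (.inl true)| = 1 := by
  unfold Monotone3 at hmono
  by_cases hf : .inl false ∈ S <;> by_cases ht : .inl true ∈ S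
  · refine absurd (eq_univ_iff_forall.mpr ?_) huniv
    rintro ((_ | _) | i)
    exacts [hf, ht, by have := hmono i; tauto]
  · simp [ind, hf, ht]
  · simp [ind, hf, ht]
  · refine absurd (eq_empty_iff_forall_notMem.mpr ?_) hne
    rintro ((_ | _) | i)
    exacts [hf, ht, by have := hmono i; tauto]

/-- Let `n ≥ 2` and let `f` be an embedding of `K_{2,n}` into `L₁` whose
associated cut measure `μ` is supported only on nontrivial cuts that are monotone with
respect to every geodesic `s–mᵢ–t`.  Then the distortion of `f` is at least `2 - 2/n`. -/
theorem stmt7 (n : ℕ) (hn : 2 ≤ n) (μ : Finset (Bool ⊕ Fin n) → ℝ) (hμ : ∀ S, 0 ≤ μ S)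
    (hsupp : ∀ S : Finset (Bool ⊕ Fin n), μ S ≠ 0 →
      S ≠ ∅ ∧ S ≠ Finset.univ ∧
        ∀ i : Fin n, Monotone3 (Sum.inl false ∈ S) (Sum.inr i ∈ S) (Sum.inl true ∈ S))
    (K L : ℝ)
    (hK : ∀ u v, cutDist μ u v ≤
      K * ((completeBipartiteGraph Bool (Fin n)).dist u v : ℝ))
    (hL : ∀ u v, ((completeBipartiteGraph Bool (Fin n)).dist u v : ℝ) ≤ L * cutDist μ u v) :
    2 - 2 / (n : ℝ) ≤ K * L := by
  have : Nonempty (Fin n) := ⟨⟨0, by omega⟩⟩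
  have hn₀ : (0 : ℝ) < n := Nat.cast_pos.mpr (by omega)
  have hst := SimpleGraph.completeBipartiteGraph_dist_inl_inl (W := Fin n) Bool.false_ne_true
  have hK_st := hK (.inl false) (.inl true)
  have hL_st := hL (.inl false) (.inl true)
  rw [hst, Nat.cast_ofNat] at hK_st hL_st
  have hL₀ : 0 ≤ L := by nlinarith [cutDist_nonneg hμ (.inl false) (.inl true)]
  have hsep : ∀ S, μ S ≠ 0 → |ind S (.inl false) - ind S (.inl true)| = 1 := fun S hS =>
    let ⟨hne, huniv, hmono⟩ := hsupp S hS
    abs_ind_inl_false_sub_ind_inl_true_eq_one hne huniv hmono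
  have hmid := sum_sum_cutDist_le_of_separates hμ hsep (Sum.inr : Fin n → Bool ⊕ Fin n)
  rw [Fintype.card_fin] at hmid
  have key : 2 * (n : ℝ) ^ 2 - 2 * n ≤ K * L * n ^ 2 := by
    calc 2 * (n : ℝ) ^ 2 - 2 * n
        = ∑ i : Fin n, ∑ j : Fin n,
            ((completeBipartiteGraph Bool (Fin n)).dist (.inr i) (.inr j) : ℝ) := by
          rw [SimpleGraph.sum_sum_completeBipartiteGraph_dist_inr_inr, Fintype.card_fin]
      _ ≤ L * ∑ i : Fin n, ∑ j : Fin n, cutDist μ (.inr i) (.inr j) := by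
          simp only [mul_sum]
          exact sum_le_sum fun i _ => sum_le_sum fun j _ => hL _ _
      _ ≤ L * ((n : ℝ) ^ 2 / 2 * (2 * K)) := by
          gcongr
          exact hmid.trans (by gcongr; linarith)
      _ = K * L * n ^ 2 := by ring
  calc 2 - 2 / (n : ℝ) = (2 * n ^ 2 - 2 * n) / n ^ 2 := by field_simp
    _ ≤ K * L * n ^ 2 / n ^ 2 := by gcongr
    _ = K * L := by field_simp
end

section
/- Let (X,d) be a metric space, M ≥ 2 and N ≥ 1 integers, and f : [0,1] → X a non-expansive map such that the restriction of f to the level-(N+1) grid points L_{N+1} = {j·M^{-(N+1)} : 0 ≤ j ≤ M^{N+1}} has distortion at most D. If for at least h of the levels k ∈ {1,...,N} the map f is (ε,δ)-inefficient at level k, then D ≥ εδh/2. -/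
/-!
Let `T k` be the length of the polygonal path through the `f`-images of the level-`k` grid
points. By the triangle inequality `T k ≤ T (k + 1)`, and at a level where `f` is
`(ε,δ)`-inefficient each of the at least `δ M^k` bad intervals `[a,b]` gains an extra
`ε d(f a, f b) ≥ ε / (M^k D)` (by the distortion bound), so `T` grows by at least `εδ/D` there.
Non-expansiveness gives `T (N + 1) ≤ 1`, hence `εδh/D ≤ 1`.
-/

/-- `f` restricted to `[a,b]` is `ε`-efficient at granularity `M`. -/
def EffAtGranularity {X : Type*} [MetricSpace X] (f : ℝ → X) (ε : ℝ) (M : ℕ) (a b : ℝ) :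
    Prop :=
  ∑ j ∈ Finset.range M,
      dist (f (a + (b - a) * j / M)) (f (a + (b - a) * (j + 1) / M)) ≤
    (1 + ε) * dist (f a) (f b)

open Classical in
/-- `f` is `(ε,δ)`-inefficient at level `k` (for granularity `M`): at least `δ·M^k` of the
level-`k` intervals `[j M⁻ᵏ, (j+1) M⁻ᵏ]` fail to be `ε`-efficient at granularity `M`. -/
noncomputable def IneffAtLevel {X : Type*} [MetricSpace X] (f : ℝ → X) (ε δ : ℝ) (M k : ℕ) :
    Prop :=
  δ * (M : ℝ) ^ k ≤
    (((Finset.range (M ^ k)).filter (fun j =>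
      ¬ EffAtGranularity f ε M ((j : ℝ) / (M : ℝ) ^ k) ((j + 1 : ℝ) / (M : ℝ) ^ k))).card : ℝ)

theorem Finset.sum_range_mul_eq_sum_sum {β : Type*} [AddCommMonoid β] (g : ℕ → β) (m n : ℕ) :
    ∑ j ∈ Finset.range (m * n), g j
      = ∑ j ∈ Finset.range m, ∑ i ∈ Finset.range n, g (j * n + i) := by
  induction m with
  | zero => simp
  | succ m ih => rw [Nat.succ_mul, Finset.sum_range_add, ih, Finset.sum_range_succ]

theorem Finset.card_filter_Ico_mul_le_sub {T : ℕ → ℝ} {c : ℝ} (P : ℕ → Prop) [DecidablePred P]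
    {m n : ℕ} (hmn : m ≤ n)
    (hstep : ∀ k ∈ Finset.Ico m n, T k + (if P k then c else 0) ≤ T (k + 1)) :
    ((Finset.Ico m n).filter P).card * c ≤ T n - T m := by
  rw [← Finset.sum_Ico_sub T hmn, ← nsmul_eq_mul, ← Finset.sum_const, Finset.sum_filter]
  exact Finset.sum_le_sum fun k hk => by linarith [hstep k hk]

section LevelLength

open Finset

variable {X : Type*} [MetricSpace X] {f : ℝ → X} {M : ℕ}

noncomputable def subdivisionLength (f : ℝ → X) (M : ℕ) (a b : ℝ) : ℝ :=
  ∑ i ∈ range M, dist (f (a + (b - a) * i / M)) (f (a + (b - a) * (i + 1) / M))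

theorem dist_le_subdivisionLength (hM : M ≠ 0) (f : ℝ → X) (a b : ℝ) :
    dist (f a) (f b) ≤ subdivisionLength f M a b := by
  have hM' : (M : ℝ) ≠ 0 := by exact_mod_cast hM
  simpa [subdivisionLength, hM'] using
    dist_le_range_sum_dist (fun i : ℕ => f (a + (b - a) * i / M)) M

noncomputable def levelLength (f : ℝ → X) (M k : ℕ) : ℝ :=
  ∑ j ∈ range (M ^ k), dist (f (j / (M : ℝ) ^ k)) (f ((j + 1) / (M : ℝ) ^ k))

theorem levelLength_nonneg (f : ℝ → X) (M k : ℕ) : 0 ≤ levelLength f M k :=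
  sum_nonneg fun _ _ => dist_nonneg

theorem levelLength_succ (hM : M ≠ 0) (f : ℝ → X) (k : ℕ) :
    levelLength f M (k + 1) =
      ∑ j ∈ range (M ^ k), subdivisionLength f M (j / (M : ℝ) ^ k) ((j + 1) / (M : ℝ) ^ k) := by
  have hM' : (M : ℝ) ≠ 0 := by exact_mod_cast hM
  rw [levelLength, pow_succ, sum_range_mul_eq_sum_sum]
  refine sum_congr rfl fun j _ => sum_congr rfl fun i _ => ?_
  congr 2 <;> (push_cast; field_simp; ring)

theorem levelLength_le_one (hM : M ≠ 0)
    (hf : ∀ x ∈ Set.Icc (0 : ℝ) 1, ∀ y ∈ Set.Icc (0 : ℝ) 1, dist (f x) (f y) ≤ |x - y|) (k : ℕ) :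
    levelLength f M k ≤ 1 := by
  have hMk : (0 : ℝ) < (M : ℝ) ^ k := by positivity
  calc levelLength f M k ≤ ∑ _j ∈ range (M ^ k), 1 / (M : ℝ) ^ k := by
        refine sum_le_sum fun j hj => ?_
        have hj : (j : ℝ) + 1 ≤ (M : ℝ) ^ k := by exact_mod_cast mem_range.mp hj
        have hmem : ∀ x : ℝ, 0 ≤ x → x ≤ (j : ℝ) + 1 → x / (M : ℝ) ^ k ∈ Set.Icc (0 : ℝ) 1 :=
          fun x hx0 hx1 => ⟨by positivity, (div_le_one hMk).mpr (by linarith)⟩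
        refine (hf _ (hmem j (by positivity) (by linarith)) _
          (hmem (j + 1) (by positivity) le_rfl)).trans_eq ?_
        rw [← sub_div, abs_div, abs_of_pos hMk]
        simp
    _ = 1 := by simp [field]

theorem one_div_le_dist_of_distortion (hM : M ≠ 0) {D : ℝ} {n k j : ℕ} (hkn : k ≤ n)
    (hj : j < M ^ k)
    (hdist : ∀ i ≤ M ^ n, ∀ j ≤ M ^ n,
      |(i : ℝ) / (M : ℝ) ^ n - (j : ℝ) / (M : ℝ) ^ n| / D ≤
        dist (f ((i : ℝ) / (M : ℝ) ^ n)) (f ((j : ℝ) / (M : ℝ) ^ n))) :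
    1 / ((M : ℝ) ^ k * D) ≤ dist (f (j / (M : ℝ) ^ k)) (f ((j + 1) / (M : ℝ) ^ k)) := by
  have hM' : (M : ℝ) ≠ 0 := by exact_mod_cast hM
  have hpow : M ^ k * M ^ (n - k) = M ^ n := pow_mul_pow_sub M hkn
  have hrefine : ∀ i : ℕ, ((i * M ^ (n - k) : ℕ) : ℝ) / (M : ℝ) ^ n = i / (M : ℝ) ^ k := by
    intro i
    rw [← pow_mul_pow_sub (M : ℝ) hkn]
    push_cast
    field_simp
  have h := hdist (j * M ^ (n - k)) (hpow ▸ Nat.mul_le_mul_right _ hj.le)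
    ((j + 1) * M ^ (n - k)) (hpow ▸ Nat.mul_le_mul_right _ hj)
  rw [hrefine, hrefine] at h
  push_cast at h
  refine le_trans (le_of_eq ?_) h
  rw [← sub_div, abs_div, abs_of_pos (by positivity : (0 : ℝ) < (M : ℝ) ^ k),
    show (j : ℝ) - (j + 1) = -1 by ring, abs_neg, abs_one, div_div]

theorem effAtGranularity_iff {ε a b : ℝ} :
    EffAtGranularity f ε M a b ↔ subdivisionLength f M a b ≤ (1 + ε) * dist (f a) (f b) :=
  Iff.rfl

open Classical in
noncomputable def inefficientIntervals (f : ℝ → X) (ε : ℝ) (M k : ℕ) : Finset ℕ :=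
  (range (M ^ k)).filter fun j : ℕ =>
    ¬EffAtGranularity f ε M (j / (M : ℝ) ^ k) ((j + 1) / (M : ℝ) ^ k)

open Classical in
theorem inefficientIntervals_subset (f : ℝ → X) (ε : ℝ) (M k : ℕ) :
    inefficientIntervals f ε M k ⊆ range (M ^ k) :=
  filter_subset _ _

open Classical in
/-- `IneffAtLevel` filters `Finset.range (M ^ k)` coerced to a `Finset ℝ`; this restates it
over `ℕ`. -/
theorem ineffAtLevel_iff {ε δ : ℝ} {k : ℕ} :
    IneffAtLevel f ε δ M k ↔ δ * (M : ℝ) ^ k ≤ #(inefficientIntervals f ε M k) := by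
  rw [IneffAtLevel, show ((do let a ← range (M ^ k); pure (a : ℝ)) : Finset ℝ)
      = (range (M ^ k)).image (Nat.cast : ℕ → ℝ) by ext; simp,
    filter_image, card_image_of_injective _ Nat.cast_injective]
  rfl

theorem levelLength_add_le (hM : M ≠ 0) (f : ℝ → X) (ε : ℝ) (k : ℕ) :
    levelLength f M k + ε * ∑ j ∈ inefficientIntervals f ε M k,
        dist (f (j / (M : ℝ) ^ k)) (f ((j + 1) / (M : ℝ) ^ k)) ≤
      levelLength f M (k + 1) := by
  rw [levelLength_succ hM, levelLength, inefficientIntervals, mul_sum, sum_filter,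
    ← sum_add_distrib]
  refine sum_le_sum fun j _ => ?_
  split_ifs with hbad
  · simpa using dist_le_subdivisionLength hM f _ _
  · rw [effAtGranularity_iff, not_le] at hbad
    linarith

open Classical in
theorem levelLength_add_ite_le (hM : M ≠ 0) {ε δ D : ℝ} (hε : 0 ≤ ε) (hD : 0 < D) {k : ℕ}
    (hlow : ∀ j < M ^ k,
      1 / ((M : ℝ) ^ k * D) ≤ dist (f (j / (M : ℝ) ^ k)) (f ((j + 1) / (M : ℝ) ^ k))) :
    levelLength f M k + (if IneffAtLevel f ε δ M k then ε * δ / D else 0) ≤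
      levelLength f M (k + 1) := by
  have hstep := levelLength_add_le hM f ε k
  split_ifs with hineff
  · have hMk : (0 : ℝ) < (M : ℝ) ^ k := by positivity
    rw [ineffAtLevel_iff] at hineff
    calc levelLength f M k + ε * δ / D
        = levelLength f M k + ε * ((δ * (M : ℝ) ^ k) * (1 / ((M : ℝ) ^ k * D))) := by
          field_simp
      _ ≤ levelLength f M k + ε * ∑ j ∈ inefficientIntervals f ε M k,
            dist (f (j / (M : ℝ) ^ k)) (f ((j + 1) / (M : ℝ) ^ k)) := by
          grw [hineff, ← nsmul_eq_mul]
          gcongr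
          exact card_nsmul_le_sum _ _ _ fun j hj =>
            hlow j (mem_range.mp (inefficientIntervals_subset f ε M k hj))
      _ ≤ levelLength f M (k + 1) := hstep
  · simpa using (le_add_of_nonneg_right (mul_nonneg hε (sum_nonneg fun _ _ => dist_nonneg))).trans
      hstep

end LevelLength

open Classical in
theorem stmt8_general {X : Type*} [MetricSpace X] (f : ℝ → X) (M N : ℕ) (hM : 2 ≤ M)
    (ε δ D : ℝ) (hε : 0 < ε) (hδ : 0 < δ) (hD : 0 < D) (h : ℕ)
    (hnonexp : ∀ x ∈ Set.Icc (0 : ℝ) 1, ∀ y ∈ Set.Icc (0 : ℝ) 1,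
      dist (f x) (f y) ≤ |x - y|)
    (hdistortion : ∀ i ≤ M ^ (N + 1), ∀ j ≤ M ^ (N + 1),
      |(i : ℝ) / (M : ℝ) ^ (N + 1) - (j : ℝ) / (M : ℝ) ^ (N + 1)| / D ≤
        dist (f ((i : ℝ) / (M : ℝ) ^ (N + 1))) (f ((j : ℝ) / (M : ℝ) ^ (N + 1))))
    (hineff : h ≤ ((Finset.Icc 1 N).filter (fun k => IneffAtLevel f ε δ M k)).card) :
    ε * δ * h / 2 ≤ D := by
  have hM0 : M ≠ 0 := by omega
  have hgain := Finset.card_filter_Ico_mul_le_sub (T := levelLength f M) (c := ε * δ / D)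
    (fun k => IneffAtLevel f ε δ M k) (Nat.le_add_left 1 N) fun k hk =>
      levelLength_add_ite_le hM0 hε.le hD fun j hj =>
        one_div_le_dist_of_distortion hM0 (by grind) hj hdistortion
  rw [Finset.Ico_add_one_right_eq_Icc] at hgain
  have hεδh : ε * δ * h / D ≤ 1 :=
    calc ε * δ * h / D = h * (ε * δ / D) := by ring
      _ ≤ _ * (ε * δ / D) := by gcongr
      _ ≤ levelLength f M (N + 1) - levelLength f M 1 := hgain
      _ ≤ 1 := by linarith [levelLength_le_one hM0 hnonexp (N + 1), levelLength_nonneg f M 1]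
  rw [div_le_one hD] at hεδh
  linarith [show 0 ≤ ε * δ * h by positivity]

open Classical in
/-- **coarse differentiation.** If a non-expansive `f : [0,1] → X` has
distortion at most `D` on the level-`(N+1)` grid, and is `(ε,δ)`-inefficient at at least `h`
of the levels `1,…,N`, then `D ≥ εδh/2`. -/
theorem stmt8 {X : Type*} [MetricSpace X] (f : ℝ → X) (M N : ℕ) (hM : 2 ≤ M) (hN : 1 ≤ N)
    (ε δ D : ℝ) (hε : 0 < ε) (hδ : 0 < δ) (hD : 0 < D) (h : ℕ)
    (hnonexp : ∀ x ∈ Set.Icc (0 : ℝ) 1, ∀ y ∈ Set.Icc (0 : ℝ) 1,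
      dist (f x) (f y) ≤ |x - y|)
    (hdistortion : ∀ i ≤ M ^ (N + 1), ∀ j ≤ M ^ (N + 1),
      |(i : ℝ) / (M : ℝ) ^ (N + 1) - (j : ℝ) / (M : ℝ) ^ (N + 1)| / D ≤
        dist (f ((i : ℝ) / (M : ℝ) ^ (N + 1))) (f ((j : ℝ) / (M : ℝ) ^ (N + 1))))
    (hineff : h ≤ ((Finset.Icc 1 N).filter (fun k => IneffAtLevel f ε δ M k)).card) :
    ε * δ * h / 2 ≤ D :=
  stmt8_general f M N hM ε δ D hε hδ hD h hnonexp hdistortion hineff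
end

section
/- Let A, B ≥ 0 be reals with A + B ≤ 1/2 and let n ≥ 1 be an integer. Then (1/2 + B + A/(2n-1) - (4n/(2n-1))·A·B) / (1/2 + A + B) ≥ (2n+1)/(4n). -/
/-! Clearing the positive denominators `4n`, `2n - 1` and `1/2 + A + B` turns the claim into the
nonnegativity of `distortionGap n A B`, a polynomial affine in `B`. At `B = 0` it is visibly
nonnegative, and on the edge `A + B = 1/2` it is the perfect square `(4nA - (2n - 1))²`, so it is
nonnegative on the whole triangle. The square vanishes at `A = (2n - 1)/(4n)`: the bound is sharp. -/

lemma nonneg_of_affine_nonneg_endpoints {a b t x : ℝ} (hx₀ : 0 ≤ x) (hxt : x ≤ t)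
    (h₀ : 0 ≤ a) (ht : 0 ≤ a + b * t) : 0 ≤ a + b * x := by
  rcases le_total 0 b with hb | hb
  · positivity
  · nlinarith [mul_le_mul_of_nonpos_left hxt hb]

noncomputable def distortionGap (m A B : ℝ) : ℝ :=
  (2 * m - 1) ^ 2 * (1 / 2 + B - A) + 2 * A - 16 * m ^ 2 * A * B

lemma distortionGap_eq_affine (m A B : ℝ) :
    distortionGap m A B =
      ((2 * m - 1) ^ 2 * (1 / 2 - A) + 2 * A) + ((2 * m - 1) ^ 2 - 16 * m ^ 2 * A) * B := by
  unfold distortionGap; ring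

lemma distortionGap_edge (m A : ℝ) :
    distortionGap m A (1 / 2 - A) = (4 * m * A - (2 * m - 1)) ^ 2 := by
  unfold distortionGap; ring

lemma distortionGap_nonneg (m : ℝ) {A B : ℝ} (hA : 0 ≤ A) (hB : 0 ≤ B) (hAB : A + B ≤ 1 / 2) :
    0 ≤ distortionGap m A B := by
  have h_zero : 0 ≤ (2 * m - 1) ^ 2 * (1 / 2 - A) + 2 * A := by
    have : 0 ≤ 1 / 2 - A := by linarith
    positivity
  have h_edge : 0 ≤ distortionGap m A (1 / 2 - A) := distortionGap_edge m A ▸ sq_nonneg _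
  rw [distortionGap_eq_affine] at h_edge ⊢
  exact nonneg_of_affine_nonneg_endpoints hB (by linarith) h_zero h_edge

lemma separation_ratio_sub_eq {m A B : ℝ} (hm : m ≠ 0) (hm' : 2 * m - 1 ≠ 0)
    (hAB : 1 / 2 + A + B ≠ 0) :
    (1 / 2 + B + A / (2 * m - 1) - (4 * m / (2 * m - 1)) * A * B) / (1 / 2 + A + B)
        - (2 * m + 1) / (4 * m) =
      distortionGap m A B / (4 * m * (2 * m - 1) * (1 / 2 + A + B)) := by
  -- `field_simp` clears `1 / 2 + A + B` in the scaled form `1 + 2 * A + 2 * B`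
  have hAB' : 1 + 2 * A + 2 * B ≠ 0 := by contrapose! hAB; linarith
  unfold distortionGap
  field_simp
  ring

/-- For reals `A, B ≥ 0` with `A + B ≤ 1/2` and an integer `n ≥ 1`,
`(1/2 + B + A/(2n-1) - (4n/(2n-1))·A·B) / (1/2 + A + B) ≥ (2n+1)/(4n)`. -/
theorem stmt12 (A B : ℝ) (hA : 0 ≤ A) (hB : 0 ≤ B) (hAB : A + B ≤ 1 / 2)
    (n : ℕ) (hn : 1 ≤ n) :
    (2 * (n : ℝ) + 1) / (4 * (n : ℝ)) ≤
      (1 / 2 + B + A / (2 * (n : ℝ) - 1) - (4 * (n : ℝ) / (2 * (n : ℝ) - 1)) * A * B) /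
        (1 / 2 + A + B) := by
  have hn' : (1 : ℝ) ≤ n := by exact_mod_cast hn
  have h_odd : 0 < 2 * (n : ℝ) - 1 := by linarith
  have h_den : 0 < 1 / 2 + A + B := by linarith
  rw [← sub_nonneg, separation_ratio_sub_eq (by positivity) h_odd.ne' h_den.ne']
  exact div_nonneg (distortionGap_nonneg n hA hB hAB) (by positivity)
end
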